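/- arXiv:math/0610947 — 3 statements merged into one kernel-verified Lean document; each statement's English description precedes it below -/
import Mathlib

section
/- Let X be a complete CAT(0) space, ε > 0, and C ⊆ X a connected, closed subset such that for every x ∈ C the set B_ε(x) ∩ C is convex (where B_ε(x) is the closed ball of radius ε). Then C is convex, i.e., for all x, y ∈ C the geodesic segment from x to y is contained in C. -/
open Set Metric

/-- A CAT(0) space structure: a geodesic bicombing (affinely parametrized on `[0,1]`)
satisfying the CAT(0) comparison inequality. -/
class CAT0 (X : Type*) [MetricSpace X] where
  geo : X → X → ℝ → X
  geo_zero : ∀ x y, geo x y 0 = x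
  geo_one : ∀ x y, geo x y 1 = y
  geo_dist : ∀ x y, ∀ s ∈ Set.Icc (0:ℝ) 1, ∀ t ∈ Set.Icc (0:ℝ) 1,
    dist (geo x y s) (geo x y t) = |s - t| * dist x y
  comparison : ∀ x y z, ∀ t ∈ Set.Icc (0:ℝ) 1,
    dist (geo x y t) z ^ 2 ≤ (1 - t) * dist x z ^ 2 + t * dist y z ^ 2
      - t * (1 - t) * dist x y ^ 2

/-- The geodesic segment between `x` and `y`. -/
def geoSeg (X : Type*) [MetricSpace X] [CAT0 X] (x y : X) : Set X :=
  (fun t => CAT0.geo x y t) '' Set.Icc (0:ℝ) 1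

/-- A subset is (geodesically) convex if it contains the geodesic segment
between any two of its points. -/
def GConvex (X : Type*) [MetricSpace X] [CAT0 X] (C : Set X) : Prop :=
  ∀ x ∈ C, ∀ y ∈ C, geoSeg X x y ⊆ C
open Filter Real


/-!
Connectedness gives an `ε/2`-chain in `C` from `x` to `y`, which can be padded to any length `N`
beyond its own. Replacing every interior point of the chain by the midpoint of its two neighbours
keeps it an `ε/2`-chain in `C`, by local convexity. In a CAT(0) space the midpoint map is
`1/2`-Lipschitz in each argument, so the distances of the iterated chains to the equally spaced
points `geo x y (j / N)` obey a discrete heat inequality with zero boundary values and hence tend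
to `0`. Therefore these points lie in the closed set `C`, and by density so does the whole segment.
-/
open Filter Topology

section DiscreteHeat

lemma one_sub_one_div_sq_nonneg {N : ℕ} (hN : 0 < N) : 0 ≤ 1 - 1 / (N : ℝ) ^ 2 := by
  have hNR : (1 : ℝ) ≤ N := by exact_mod_cast hN
  rw [sub_nonneg]
  exact div_le_one_of_le₀ (by nlinarith) (by positivity)

lemma le_mul_pow_of_le_avg {N : ℕ} (hN : 0 < N) {M : ℝ} (a : ℕ → ℕ → ℝ)
    (h0 : ∀ k, a k 0 = 0) (hN0 : ∀ k, a k N = 0) (hinit : ∀ j ≤ N, a 0 j ≤ M)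
    (hrec : ∀ k j, j + 1 < N → a (k + 1) (j + 1) ≤ (a k j + a k (j + 2)) / 2) (k : ℕ) :
    ∀ j ≤ N, a k j ≤ M * (1 - 1 / (N : ℝ) ^ 2) ^ k * (j * (N - j)) := by
  have hq := one_sub_one_div_sq_nonneg hN
  have hM : 0 ≤ M := h0 0 ▸ hinit 0 (Nat.zero_le N)
  induction k with
  | zero =>
    intro j hj
    rcases Nat.eq_zero_or_pos j with rfl | hj0
    · simp [h0]
    rcases hj.eq_or_lt with rfl | hjN
    · simp [hN0]
    have hj1 : (1 : ℝ) ≤ j := by exact_mod_cast hj0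
    have hjN' : (j : ℝ) + 1 ≤ N := by exact_mod_cast hjN
    calc a 0 j ≤ M := hinit j hj
      _ ≤ M * (1 - 1 / (N : ℝ) ^ 2) ^ 0 * (j * (N - j)) := by
        rw [pow_zero, mul_one]
        exact le_mul_of_one_le_right hM (by nlinarith)
  | succ k ih =>
    intro j hj
    rcases Nat.eq_zero_or_pos j with rfl | hj0
    · simp [h0]
    rcases hj.eq_or_lt with rfl | hjN
    · simp [hN0]
    obtain ⟨i, rfl⟩ := Nat.exists_eq_add_of_le' hj0
    set c := M * (1 - 1 / (N : ℝ) ^ 2) ^ k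
    have hc : 0 ≤ c := by positivity
    have hi : (i : ℝ) + 2 ≤ N := by exact_mod_cast hjN
    -- averaging the neighbours of `j * (N - j)` subtracts exactly `1`, at least `1 / N ^ 2` of it
    calc a (k + 1) (i + 1) ≤ (a k i + a k (i + 2)) / 2 := hrec k i hjN
      _ ≤ (c * (i * (N - i)) + c * ((i + 2 : ℕ) * (N - (i + 2 : ℕ)))) / 2 := by
        gcongr
        · exact ih i (by omega)
        · exact ih (i + 2) (by omega)
      _ = c * (((i + 1 : ℕ) : ℝ) * (N - (i + 1 : ℕ)) - 1) := by push_cast; ring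
      _ ≤ c * ((1 - 1 / (N : ℝ) ^ 2) * (((i + 1 : ℕ) : ℝ) * (N - (i + 1 : ℕ)))) := by
        gcongr
        have hv : ((i + 1 : ℕ) : ℝ) * (N - (i + 1 : ℕ)) ≤ (N : ℝ) ^ 2 := by push_cast; nlinarith
        have : ((i + 1 : ℕ) : ℝ) * (N - (i + 1 : ℕ)) * (1 / (N : ℝ) ^ 2) ≤ 1 := by
          rw [mul_one_div]; exact div_le_one_of_le₀ hv (by positivity)
        linarith
      _ = _ := by ring

lemma tendsto_zero_of_le_avg {N : ℕ} (hN : 0 < N) (a : ℕ → ℕ → ℝ) (ha : ∀ k j, 0 ≤ a k j)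
    (h0 : ∀ k, a k 0 = 0) (hN0 : ∀ k, a k N = 0)
    (hrec : ∀ k j, j + 1 < N → a (k + 1) (j + 1) ≤ (a k j + a k (j + 2)) / 2)
    {j : ℕ} (hj : j ≤ N) : Tendsto (fun k => a k j) atTop (𝓝 0) := by
  have hinit : ∀ i ≤ N, a 0 i ≤ ∑ l ∈ Finset.range (N + 1), a 0 l := fun i hi =>
    Finset.single_le_sum (fun l _ => ha 0 l) (Finset.mem_range.2 (Nat.lt_succ_of_le hi))
  have hq1 : 1 - 1 / (N : ℝ) ^ 2 < 1 := by
    have : 0 < 1 / (N : ℝ) ^ 2 := by positivity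
    linarith
  refine squeeze_zero (fun k => ha k j)
    (fun k => le_mul_pow_of_le_avg hN a h0 hN0 hinit hrec k j hj) ?_
  have hpow := tendsto_pow_atTop_nhds_zero_of_lt_one (one_sub_one_div_sq_nonneg hN) hq1
  simpa using (hpow.const_mul _).mul_const ((j : ℝ) * (N - j))

end DiscreteHeat

section Chain

variable {Y : Type*} [MetricSpace Y]

structure IsDeltaChain (C : Set Y) (δ : ℝ) (N : ℕ) (x y : Y) (w : ℕ → Y) : Prop where
  start : w 0 = x
  eq_of_le : ∀ j, N ≤ j → w j = y
  mem : ∀ j, w j ∈ C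
  dist_succ_le : ∀ j, dist (w j) (w (j + 1)) ≤ δ

variable {C : Set Y} {δ : ℝ} {N : ℕ} {x y : Y} {w : ℕ → Y}

lemma IsDeltaChain.mono {M : ℕ} (hw : IsDeltaChain C δ N x y w) (hNM : N ≤ M) :
    IsDeltaChain C δ M x y w :=
  ⟨hw.start, fun j hj => hw.eq_of_le j (hNM.trans hj), hw.mem, hw.dist_succ_le⟩

lemma IsDeltaChain.snoc {z : Y} (hw : IsDeltaChain C δ N x y w) (hz : z ∈ C)
    (hyz : dist y z ≤ δ) :
    IsDeltaChain C δ (N + 1) x z (fun j => if j ≤ N then w j else z) where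
  start := by simp [hw.start]
  eq_of_le j hj := by simp only [if_neg (show ¬j ≤ N by omega)]
  mem j := by split <;> simp [hw.mem, hz]
  dist_succ_le j := by
    rcases lt_trichotomy j N with h | rfl | h
    · simp only [if_pos h.le, if_pos (show j + 1 ≤ N by omega), hw.dist_succ_le]
    · simp [hw.eq_of_le j le_rfl, hyz]
    · simp only [if_neg (show ¬j ≤ N by omega), if_neg (show ¬j + 1 ≤ N by omega), dist_self]
      exact dist_nonneg.trans (hw.dist_succ_le 0)

lemma IsPreconnected.exists_isDeltaChain (hC : IsPreconnected C) (hδ : 0 < δ) (hx : x ∈ C)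
    (hy : y ∈ C) : ∃ N w, IsDeltaChain C δ N x y w := by
  let R : Y → Y → Prop := fun a b => b ∈ C ∧ dist a b ≤ δ
  have hR : Relation.ReflTransGen R x y := by
    refine hC.induction₂' _ (fun a ha => ?_) (fun _ _ _ _ _ _ => .trans) hx hy
    filter_upwards [self_mem_nhdsWithin, inter_mem_nhdsWithin C (closedBall_mem_nhds a hδ)]
      with b hb hb'
    exact ⟨.single ⟨hb, dist_comm a b ▸ hb'.2⟩, .single ⟨ha, hb'.2⟩⟩
  clear hy
  induction hR with
  | refl => exact ⟨0, fun _ => x, ⟨rfl, fun _ _ => rfl, fun _ => hx, by simp [hδ.le]⟩⟩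
  | tail _ hbc ih =>
    obtain ⟨N, w, hw⟩ := ih
    exact ⟨N + 1, _, hw.snoc hbc.1 hbc.2⟩

end Chain

namespace CAT0

variable {X : Type*} [MetricSpace X] [CAT0 X]

lemma half_mem_Icc : (1 / 2 : ℝ) ∈ Icc (0 : ℝ) 1 := by norm_num

noncomputable def mid (a b : X) : X := geo a b (1 / 2)

lemma dist_left_mid (a b : X) : dist a (mid a b) = dist a b / 2 := by
  have h := geo_dist a b 0 (by norm_num) (1 / 2) half_mem_Icc
  rw [geo_zero] at h
  rw [mid, h]
  norm_num
  ring

lemma dist_right_mid (a b : X) : dist b (mid a b) = dist a b / 2 := by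
  have h := geo_dist a b 1 (by norm_num) (1 / 2) half_mem_Icc
  rw [geo_one] at h
  rw [mid, h]
  norm_num
  ring

lemma eq_mid_of_dist_le {a b m : X} (ha : dist a m ≤ dist a b / 2)
    (hb : dist b m ≤ dist a b / 2) :
    mid a b = m := by
  have hcmp := comparison a b m (1 / 2) half_mem_Icc
  have ha' := pow_le_pow_left₀ dist_nonneg ha 2
  have hb' := pow_le_pow_left₀ dist_nonneg hb 2
  have : dist (mid a b) m ^ 2 ≤ 0 := by unfold mid; nlinarith
  exact dist_eq_zero.1 (pow_eq_zero_iff two_ne_zero |>.1 (this.antisymm (by positivity)))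

lemma mid_comm (a b : X) : mid a b = mid b a :=
  (eq_mid_of_dist_le (by rw [dist_right_mid, dist_comm]) (by rw [dist_left_mid, dist_comm])).symm

lemma dist_mid_mid_left_le (p q q' : X) : dist (mid p q) (mid p q') ≤ dist q q' / 2 := by
  have h1 := comparison p q' (mid p q) (1 / 2) half_mem_Icc
  have h2 := comparison p q q' (1 / 2) half_mem_Icc
  rw [← mid, dist_comm (mid p q'), dist_comm q', dist_left_mid] at h1
  rw [← mid] at h2
  rw [← pow_le_pow_iff_left₀ dist_nonneg (by positivity) two_ne_zero]
  nlinarith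

lemma dist_mid_mid_le (p q p' q' : X) :
    dist (mid p q) (mid p' q') ≤ (dist p p' + dist q q') / 2 :=
  calc dist (mid p q) (mid p' q')
      ≤ dist (mid p q) (mid p q') + dist (mid q' p) (mid q' p') := by
        rw [mid_comm q' p, mid_comm q' p']; exact dist_triangle _ _ _
    _ ≤ dist q q' / 2 + dist p p' / 2 :=
        add_le_add (dist_mid_mid_left_le p q q') (dist_mid_mid_left_le q' p p')
    _ = (dist p p' + dist q q') / 2 := by ring

lemma mid_geo_geo (x y : X) {s t : ℝ} (hs : s ∈ Icc (0 : ℝ) 1) (ht : t ∈ Icc (0 : ℝ) 1) :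
    mid (geo x y s) (geo x y t) = geo x y ((s + t) / 2) := by
  have hst : (s + t) / 2 ∈ Icc (0 : ℝ) 1 := ⟨by linarith [hs.1, ht.1], by linarith [hs.2, ht.2]⟩
  refine eq_mid_of_dist_le (le_of_eq ?_) (le_of_eq ?_)
  · rw [geo_dist x y _ hs _ hst, geo_dist x y _ hs _ ht,
      show s - (s + t) / 2 = (s - t) / 2 by ring, abs_div, abs_two]
    ring
  · rw [geo_dist x y _ ht _ hst, geo_dist x y _ hs _ ht,
      show t - (s + t) / 2 = -((s - t) / 2) by ring, abs_neg, abs_div, abs_two]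
    ring

lemma natCast_div_mem_Icc {i N : ℕ} (hi : i ≤ N) : (i / N : ℝ) ∈ Icc (0 : ℝ) 1 :=
  ⟨by positivity, div_le_one_of_le₀ (by exact_mod_cast hi) (Nat.cast_nonneg N)⟩

lemma geo_mem_of_forall_div_mem {C : Set X} (hC : IsClosed C) {x y : X} (n : ℕ)
    (h : ∀ N, n ≤ N → 0 < N → ∀ j ≤ N, geo x y (j / N) ∈ C) {t : ℝ} (ht : t ∈ Icc (0 : ℝ) 1) :
    geo x y t ∈ C := by
  rw [← hC.closure_eq, Metric.mem_closure_iff]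
  intro r hr
  obtain ⟨N, hN⟩ := exists_nat_gt (max (n : ℝ) (dist x y / r))
  have hnN : n ≤ N := by exact_mod_cast ((le_max_left _ _).trans_lt hN).le
  have hN0 : (0 : ℝ) < N := (le_max_left _ _).trans_lt hN |>.trans_le' (Nat.cast_nonneg n)
  have hdN : dist x y / N < r := by
    rw [div_lt_iff₀ hN0, mul_comm, ← div_lt_iff₀ hr]
    exact (le_max_right _ _).trans_lt hN
  have hjN : ⌊t * N⌋₊ ≤ N := Nat.floor_le_of_le (mul_le_of_le_one_left hN0.le ht.2)
  refine ⟨_, h N hnN (by exact_mod_cast hN0) _ hjN, ?_⟩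
  have hj1 : (⌊t * N⌋₊ : ℝ) ≤ t * N := Nat.floor_le (by nlinarith [ht.1])
  have hj2 : t * N < ⌊t * N⌋₊ + 1 := Nat.lt_floor_add_one _
  have habs : |t - ⌊t * N⌋₊ / N| ≤ 1 / N := by
    rw [show t - ⌊t * N⌋₊ / N = (t * N - ⌊t * N⌋₊) * (1 / N) by field_simp, abs_mul,
      abs_of_pos (one_div_pos.2 hN0)]
    exact mul_le_of_le_one_left (by positivity) (abs_le.2 ⟨by linarith, by linarith⟩)
  calc dist (geo x y t) (geo x y (⌊t * N⌋₊ / N)) = |t - ⌊t * N⌋₊ / N| * dist x y :=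
        geo_dist x y t ht _ (natCast_div_mem_Icc hjN)
    _ ≤ 1 / N * dist x y := by gcongr
    _ < r := by rwa [one_div_mul_eq_div]

end CAT0

section Smoothing

open CAT0

variable {X : Type*} [MetricSpace X] [CAT0 X]

noncomputable def CAT0.smooth (N : ℕ) (w : ℕ → X) (j : ℕ) : X :=
  if 0 < j ∧ j < N then mid (w (j - 1)) (w (j + 1)) else w j

lemma CAT0.smooth_zero (N : ℕ) (w : ℕ → X) : smooth N w 0 = w 0 := by
  simp [smooth]

lemma CAT0.smooth_of_le {N j : ℕ} (w : ℕ → X) (hj : N ≤ j) : smooth N w j = w j := by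
  simp [smooth, hj]

lemma CAT0.smooth_succ {N j : ℕ} (w : ℕ → X) (hj : j + 1 < N) :
    smooth N w (j + 1) = mid (w j) (w (j + 2)) := by
  simp [smooth, hj]

variable {C : Set X} {δ : ℝ} {N : ℕ} {x y : X} {w : ℕ → X}

lemma IsDeltaChain.smooth (hmid : ∀ a ∈ C, ∀ b ∈ C, dist a b ≤ 2 * δ → mid a b ∈ C)
    (hw : IsDeltaChain C δ N x y w) : IsDeltaChain C δ N x y (smooth N w) := by
  have h2 : ∀ j, dist (w j) (w (j + 2)) ≤ 2 * δ := fun j => by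
    linarith [dist_triangle (w j) (w (j + 1)) (w (j + 2)), hw.dist_succ_le j,
      hw.dist_succ_le (j + 1)]
  refine ⟨by rw [smooth_zero, hw.start], fun j hj => by rw [smooth_of_le w hj, hw.eq_of_le j hj],
    fun j => ?_, fun j => ?_⟩
  · rcases j with _ | i
    · rw [smooth_zero]; exact hw.mem 0
    rcases lt_or_ge (i + 1) N with hi | hi
    · rw [smooth_succ w hi]; exact hmid _ (hw.mem i) _ (hw.mem (i + 2)) (h2 i)
    · rw [smooth_of_le w hi]; exact hw.mem (i + 1)
  · rcases j with _ | i
    · rw [smooth_zero]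
      rcases lt_or_ge 1 N with h1 | h1
      · rw [smooth_succ w h1, dist_left_mid]; linarith [h2 0]
      · rw [smooth_of_le w h1]; exact hw.dist_succ_le 0
    rcases lt_trichotomy (i + 2) N with hi | hi | hi
    · rw [smooth_succ w (by omega), smooth_succ w hi]
      linarith [dist_mid_mid_le (w i) (w (i + 2)) (w (i + 1)) (w (i + 3)), hw.dist_succ_le i,
        hw.dist_succ_le (i + 2)]
    · rw [smooth_succ w (by omega), smooth_of_le w hi.ge, dist_comm, dist_right_mid]
      linarith [h2 i]
    · rw [smooth_of_le w (by omega), smooth_of_le w hi.le]; exact hw.dist_succ_le (i + 1)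

lemma IsDeltaChain.geo_div_mem (hC : IsClosed C)
    (hmid : ∀ a ∈ C, ∀ b ∈ C, dist a b ≤ 2 * δ → mid a b ∈ C) (hN : 0 < N)
    (hw : IsDeltaChain C δ N x y w) {j : ℕ} (hj : j ≤ N) : geo x y (j / N) ∈ C := by
  set g : ℕ → X := fun i => geo x y (i / N)
  have hg : ∀ i, i + 1 < N → g (i + 1) = mid (g i) (g (i + 2)) := by
    intro i hi
    simp only [g]
    rw [mid_geo_geo x y (natCast_div_mem_Icc (by omega)) (natCast_div_mem_Icc (by omega))]
    congr 1
    push_cast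
    ring
  have hchain : ∀ k, IsDeltaChain C δ N x y ((CAT0.smooth N)^[k] w) := fun k => by
    induction k with
    | zero => exact hw
    | succ k ih => rw [Function.iterate_succ']; exact ih.smooth hmid
  have hlim : Tendsto (fun k => dist ((CAT0.smooth N)^[k] w j) (g j)) atTop (𝓝 0) := by
    refine tendsto_zero_of_le_avg hN _ (fun _ _ => dist_nonneg) (fun k => ?_) (fun k => ?_)
      (fun k i hi => ?_) hj
    · simp [g, (hchain k).start, geo_zero]
    · simp [g, (hchain k).eq_of_le N le_rfl, hN.ne', geo_one]
    · rw [Function.iterate_succ_apply', smooth_succ _ hi, hg i hi]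
      exact dist_mid_mid_le _ _ _ _
  exact hC.mem_of_tendsto (tendsto_iff_dist_tendsto_zero.2 hlim)
    (Eventually.of_forall fun k => (hchain k).mem j)

end Smoothing

theorem stmt0_general {X : Type*} [MetricSpace X] [CAT0 X]
    (ε : ℝ) (hε : 0 < ε) (C : Set X) (hconn : IsConnected C) (hclosed : IsClosed C)
    (hloc : ∀ x ∈ C, GConvex X (closedBall x ε ∩ C)) :
    GConvex X C := by
  have hmid : ∀ a ∈ C, ∀ b ∈ C, dist a b ≤ 2 * (ε / 2) → CAT0.mid a b ∈ C := by
    intro a ha b hb hab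
    rw [mul_div_cancel₀ _ two_ne_zero] at hab
    exact (hloc a ha a ⟨mem_closedBall_self hε.le, ha⟩ b ⟨mem_closedBall'.2 hab, hb⟩
      ⟨1 / 2, CAT0.half_mem_Icc, rfl⟩).2
  rintro x hx y hy _ ⟨t, ht, rfl⟩
  obtain ⟨n, w, hw⟩ := hconn.isPreconnected.exists_isDeltaChain (half_pos hε) hx hy
  exact CAT0.geo_mem_of_forall_div_mem hclosed n
    (fun N hnN hN j hj => (hw.mono hnN).geo_div_mem hclosed hmid hN hj) ht

theorem stmt0 {X : Type*} [MetricSpace X] [CompleteSpace X] [CAT0 X]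
    (ε : ℝ) (hε : 0 < ε) (C : Set X) (hconn : IsConnected C) (hclosed : IsClosed C)
    (hloc : ∀ x ∈ C, GConvex X (closedBall x ε ∩ C)) :
    GConvex X C :=
  stmt0_general ε hε C hconn hclosed hloc
end

section
/- Let X be a complete CAT(0) space, C₁, C₂ ⊆ X closed convex subsets and ε > 0. If C₁ ∪ C₂ is connected and for every x in the intersection of the topological boundaries ∂C₁ ∩ ∂C₂ the set B_ε(x) ∩ (C₁ ∪ C₂) is convex, then C₁ ∪ C₂ is convex. -/
open Set Metric

/-!
The union `U = C₁ ∪ C₂` is closed and locally convex: at points of `∂C₁ ∩ ∂C₂` this is the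
hypothesis, and elsewhere `U` coincides near the point with `C₁` or with `C₂`. Connectedness
gives `z ∈ C₁ ∩ C₂`, so two points `x, y ∈ U` are joined by the broken geodesic `[x, z] ∪ [z, y]`
inside `U`. Sliding the endpoint `w` of `[x, w]` from `z` to `y` keeps the segment in `U`: this
is a closed condition, and an open one because, by the CAT(0) inequality, the distance to `U`
along a segment close to one lying in `U` obeys a maximum principle and so vanishes.
-/

namespace CAT0

variable {X : Type*} [MetricSpace X] [CAT0 X]

lemma dist_geo_left (x y : X) {t : ℝ} (ht : t ∈ Icc (0:ℝ) 1) :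
    dist (geo x y t) x = t * dist x y := by
  simpa [geo_zero, abs_of_nonneg ht.1] using geo_dist x y t ht 0 ⟨le_rfl, zero_le_one⟩

lemma dist_geo_right (x y : X) {t : ℝ} (ht : t ∈ Icc (0:ℝ) 1) :
    dist (geo x y t) y = (1 - t) * dist x y := by
  have h := geo_dist x y t ht 1 ⟨zero_le_one, le_rfl⟩
  rwa [geo_one, abs_of_nonpos (by linarith [ht.2]), neg_sub] at h

lemma geo_eq_of_dist_eq {x y p : X} {t : ℝ} (ht : t ∈ Icc (0:ℝ) 1)
    (hx : dist x p = t * dist x y) (hy : dist p y = (1 - t) * dist x y) :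
    geo x y t = p := by
  have hc := comparison x y p t ht
  rw [hx, dist_comm y p, hy] at hc
  have : dist (geo x y t) p ^ 2 ≤ 0 := by nlinarith
  exact dist_eq_zero.mp (pow_eq_zero_iff two_ne_zero |>.mp (le_antisymm this (sq_nonneg _)))

lemma geo_symm (x y : X) {t : ℝ} (ht : t ∈ Icc (0:ℝ) 1) :
    geo x y t = geo y x (1 - t) := by
  refine (geo_eq_of_dist_eq ⟨by linarith [ht.2], by linarith [ht.1]⟩ ?_ ?_).symm
  · rw [dist_comm, dist_geo_right x y ht, dist_comm x y]
  · rw [dist_comm y x, dist_geo_left x y ht, sub_sub_cancel]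

lemma geo_geo_geo (x y : X) {u v t : ℝ} (hu : u ∈ Icc (0:ℝ) 1)
    (hv : v ∈ Icc (0:ℝ) 1) (ht : t ∈ Icc (0:ℝ) 1) :
    geo (geo x y u) (geo x y v) t = geo x y (u + t * (v - u)) := by
  have hw : u + t * (v - u) ∈ Icc (0:ℝ) 1 := by
    constructor <;> nlinarith [ht.1, ht.2, hu.1, hu.2, hv.1, hv.2]
  apply geo_eq_of_dist_eq ht
  · rw [geo_dist x y u hu _ hw, geo_dist x y u hu v hv,
      show u - (u + t * (v - u)) = t * (u - v) by ring, abs_mul, abs_of_nonneg ht.1, mul_assoc]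
  · rw [geo_dist x y _ hw v hv, geo_dist x y u hu v hv,
      show u + t * (v - u) - v = (1 - t) * (u - v) by ring, abs_mul,
      abs_of_nonneg (by linarith [ht.2] : (0:ℝ) ≤ 1 - t), mul_assoc]

lemma dist_geo_geo_right_le (x y y' : X) {t : ℝ} (ht : t ∈ Icc (0:ℝ) 1) :
    dist (geo x y t) (geo x y' t) ≤ t * dist y y' := by
  have c₁ := comparison x y (geo x y' t) t ht
  have c₂ := mul_le_mul_of_nonneg_left (comparison x y' y t ht) ht.1
  rw [dist_comm x, dist_geo_left x y' ht, dist_comm y] at c₁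
  rw [dist_comm y' y] at c₂
  have : dist (geo x y t) (geo x y' t) ^ 2 ≤ (t * dist y y') ^ 2 := by nlinarith
  exact pow_le_pow_iff_left₀ dist_nonneg (mul_nonneg ht.1 dist_nonneg) two_ne_zero |>.mp this

lemma dist_geo_geo_le (x x' y y' : X) {t : ℝ} (ht : t ∈ Icc (0:ℝ) 1) :
    dist (geo x y t) (geo x' y' t) ≤ (1 - t) * dist x x' + t * dist y y' := by
  have h1t : 1 - t ∈ Icc (0:ℝ) 1 := ⟨by linarith [ht.2], by linarith [ht.1]⟩
  calc dist (geo x y t) (geo x' y' t)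
      ≤ dist (geo x y t) (geo x y' t) + dist (geo x y' t) (geo x' y' t) := dist_triangle _ _ _
    _ ≤ t * dist y y' + (1 - t) * dist x x' := by
        gcongr ?_ + ?_
        · exact dist_geo_geo_right_le x y y' ht
        · rw [geo_symm x y' ht, geo_symm x' y' ht]
          exact dist_geo_geo_right_le y' x x' h1t
    _ = (1 - t) * dist x x' + t * dist y y' := add_comm _ _

lemma dist_geo_le_max (x y c : X) {t : ℝ} (ht : t ∈ Icc (0:ℝ) 1) :
    dist (geo x y t) c ≤ max (dist x c) (dist y c) := by
  have hc := comparison x y c t ht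
  have hx : dist x c ^ 2 ≤ max (dist x c) (dist y c) ^ 2 :=
    pow_le_pow_left₀ dist_nonneg (le_max_left _ _) 2
  have hy : dist y c ^ 2 ≤ max (dist x c) (dist y c) ^ 2 :=
    pow_le_pow_left₀ dist_nonneg (le_max_right _ _) 2
  have : dist (geo x y t) c ^ 2 ≤ max (dist x c) (dist y c) ^ 2 := by
    nlinarith [ht.1, ht.2,
      mul_nonneg (mul_nonneg ht.1 (sub_nonneg.mpr ht.2)) (sq_nonneg (dist x y))]
  exact pow_le_pow_iff_left₀ dist_nonneg (dist_nonneg.trans (le_max_left _ _)) two_ne_zero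
    |>.mp this

lemma continuousOn_geo (x y : X) : ContinuousOn (geo x y) (Icc (0:ℝ) 1) := by
  refine LipschitzOnWith.continuousOn (K := nndist x y) ?_
  refine LipschitzOnWith.of_dist_le_mul fun s hs t ht => ?_
  rw [geo_dist x y s hs t ht, coe_nndist, Real.dist_eq, mul_comm]

lemma continuous_geo_right (x : X) {t : ℝ} (ht : t ∈ Icc (0:ℝ) 1) :
    Continuous fun y => geo x y t :=
  LipschitzWith.continuous (K := 1) <| LipschitzWith.of_dist_le_mul fun y y' => by
    simpa using (dist_geo_geo_right_le x y y' ht).trans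
      (mul_le_of_le_one_left dist_nonneg ht.2)

end CAT0

open CAT0 Filter Topology

section LocalConvexity

variable {X : Type*} [MetricSpace X] [CAT0 X]

lemma GConvex.inter {C D : Set X} (hC : GConvex X C) (hD : GConvex X D) :
    GConvex X (C ∩ D) :=
  fun x hx y hy => subset_inter (hC x hx.1 y hy.1) (hD x hx.2 y hy.2)

lemma gConvex_closedBall (c : X) (r : ℝ) : GConvex X (closedBall c r) := by
  rintro x hx y hy _ ⟨t, ht, rfl⟩
  exact (dist_geo_le_max x y c ht).trans (max_le hx hy)

lemma isCompact_geoSeg (x y : X) : IsCompact (geoSeg X x y) :=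
  isCompact_Icc.image_of_continuousOn (continuousOn_geo x y)

lemma isClosed_setOf_geoSeg_subset {S : Set X} (hS : IsClosed S) (x : X) :
    IsClosed {y | geoSeg X x y ⊆ S} := by
  have : {y | geoSeg X x y ⊆ S} = ⋂ t ∈ Icc (0:ℝ) 1, (fun y => geo x y t) ⁻¹' S := by
    ext y
    simp only [geoSeg, mem_ofPred_eq, mem_iInter, subset_def, forall_mem_image, mem_preimage]
  rw [this]
  exact isClosed_biInter fun t ht => hS.preimage (continuous_geo_right x ht)

def IsLocallyGConvex (S : Set X) : Prop :=
  ∀ p ∈ S, ∃ r > 0, GConvex X (closedBall p r ∩ S)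

lemma GConvex.exists_closedBall_inter_of_eventuallyEq {S C : Set X} {p : X}
    (hC : GConvex X C) (h : S =ᶠ[𝓝 p] C) : ∃ r > 0, GConvex X (closedBall p r ∩ S) := by
  obtain ⟨r, hr, hball⟩ := Metric.eventually_nhds_iff.mp h
  refine ⟨r / 2, half_pos hr, ?_⟩
  have : closedBall p (r / 2) ∩ S = closedBall p (r / 2) ∩ C := by
    ext y
    refine and_congr_right fun hy => propext_iff.mp (hball ?_)
    exact (mem_closedBall.mp hy).trans_lt (half_lt_self hr)
  rw [this]
  exact (gConvex_closedBall p _).inter hC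

/-- Away from `∂C₁ ∩ ∂C₂` the union `C₁ ∪ C₂` coincides near each of its points with
`C₁` or with `C₂`. -/
lemma isLocallyGConvex_union {C₁ C₂ : Set X} (h₁closed : IsClosed C₁) (h₂closed : IsClosed C₂)
    (h₁conv : GConvex X C₁) (h₂conv : GConvex X C₂) {ε : ℝ} (hε : 0 < ε)
    (hloc : ∀ x ∈ frontier C₁ ∩ frontier C₂, GConvex X (closedBall x ε ∩ (C₁ ∪ C₂))) :
    IsLocallyGConvex (C₁ ∪ C₂) := by
  intro p hp
  by_cases hpf : p ∈ frontier C₁ ∩ frontier C₂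
  · exact ⟨ε, hε, hloc p hpf⟩
  rw [h₁closed.frontier_eq, h₂closed.frontier_eq] at hpf
  have hint : ∀ {C D : Set X}, p ∈ interior C → (C ∪ D : Set X) =ᶠ[𝓝 p] C := fun hC => by
    filter_upwards [isOpen_interior.mem_nhds hC] with y hy
    exact propext ⟨fun _ => interior_subset hy, Or.inl⟩
  have hcompl : ∀ {C D : Set X}, IsClosed D → p ∉ D → (C ∪ D : Set X) =ᶠ[𝓝 p] C := fun hD hpD => by
    filter_upwards [hD.isOpen_compl.mem_nhds hpD] with y hy
    exact propext (or_iff_left hy)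
  by_cases hp₁ : p ∈ C₁ <;> by_cases hp₂ : p ∈ C₂
  · by_cases hi : p ∈ interior C₁
    · exact h₁conv.exists_closedBall_inter_of_eventuallyEq (hint hi)
    · have hi₂ : p ∈ interior C₂ := by by_contra hi₂; exact hpf ⟨⟨hp₁, hi⟩, hp₂, hi₂⟩
      rw [union_comm]
      exact h₂conv.exists_closedBall_inter_of_eventuallyEq (hint hi₂)
  · exact h₁conv.exists_closedBall_inter_of_eventuallyEq (hcompl h₂closed hp₂)
  · rw [union_comm]
    exact h₂conv.exists_closedBall_inter_of_eventuallyEq (hcompl h₁closed hp₁)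
  · exact (hp.elim hp₁ hp₂).elim

lemma IsLocallyGConvex.exists_radius_of_isCompact {S K : Set X} (hS : IsLocallyGConvex S)
    (hK : IsCompact K) (hKS : K ⊆ S) : ∃ ρ > 0, ∀ z ∈ K, GConvex X (closedBall z ρ ∩ S) := by
  choose r hr hconv using hS
  obtain ⟨δ, hδ, hcover⟩ := lebesgue_number_lemma_of_metric hK
    (c := fun p : S => ball (p : X) (r p p.2)) (fun _ => isOpen_ball)
    fun z hz => mem_iUnion.mpr ⟨⟨z, hKS hz⟩, mem_ball_self (hr z _)⟩
  refine ⟨δ / 2, half_pos hδ, fun z hz => ?_⟩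
  obtain ⟨p, hp⟩ := hcover z hz
  have hsub : closedBall z (δ / 2) ⊆ closedBall p (r p p.2) :=
    ((closedBall_subset_ball (half_lt_self hδ)).trans hp).trans ball_subset_closedBall
  rw [← inter_eq_left.mpr hsub, inter_assoc]
  exact (gConvex_closedBall z _).inter (hconv p p.2)

end LocalConvexity

lemma ContinuousOn.le_zero_of_midpoint_le {F : ℝ → ℝ} {a b h : ℝ} (hF : ContinuousOn F (Icc a b))
    (hh : 0 < h) (ha : F a ≤ 0) (hb : F b ≤ 0)
    (hmid : ∀ s t, a ≤ s → s ≤ t → t ≤ b → t - s ≤ h → F ((s + t) / 2) ≤ (F s + F t) / 2) :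
    ∀ t ∈ Icc a b, F t ≤ 0 := by
  by_contra! ⟨t₁, ht₁, hFt₁⟩
  obtain ⟨tm, htm, hmax⟩ := isCompact_Icc.exists_isMaxOn ⟨t₁, ht₁⟩ hF
  have hM : 0 < F tm := hFt₁.trans_le (hmax ht₁)
  -- the leftmost maximiser `t₀` is interior, and the midpoint inequality fails around it
  have hA := hF.preimage_isClosed_of_isClosed isClosed_Icc (isClosed_singleton (x := F tm))
  obtain ⟨t₀, ⟨ht₀, hFt₀ : F t₀ = F tm⟩, hleast⟩ :=
    (isCompact_Icc.of_isClosed_subset hA inter_subset_left).exists_isLeast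
      ⟨tm, htm, rfl⟩
  have ha₀ : a < t₀ := ht₀.1.lt_of_ne (by rintro rfl; linarith)
  have hb₀ : t₀ < b := ht₀.2.lt_of_ne (by rintro rfl; linarith)
  set e := min (t₀ - a) (min (b - t₀) (h / 2))
  have he : 0 < e := lt_min (by linarith) (lt_min (by linarith) (by linarith))
  have he₁ : e ≤ t₀ - a := min_le_left _ _
  have he₂ : e ≤ b - t₀ := (min_le_right _ _).trans (min_le_left _ _)
  have he₃ : e ≤ h / 2 := (min_le_right _ _).trans (min_le_right _ _)
  have hleft : F (t₀ - e) < F tm := by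
    refine (hmax ⟨by linarith, by linarith⟩).lt_of_ne fun heq => ?_
    linarith [hleast ⟨⟨by linarith, by linarith⟩, heq⟩]
  have hright : F (t₀ + e) ≤ F tm := hmax ⟨by linarith, by linarith⟩
  have := hmid (t₀ - e) (t₀ + e) (by linarith) (by linarith) (by linarith) (by linarith)
  rw [show (t₀ - e + (t₀ + e)) / 2 = t₀ by ring] at this
  linarith

section Perturbation

variable {X : Type*} [MetricSpace X] [CAT0 X]

lemma infDist_geo_half_le {S : Set X} {c u v : X} {ρ : ℝ}
    (hconv : GConvex X (closedBall c ρ ∩ S))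
    (hu : infDist u S + dist u c < ρ) (hv : infDist v S + dist v c < ρ) :
    infDist (geo u v (1 / 2)) S ≤ (infDist u S + infDist v S) / 2 := by
  rcases S.eq_empty_or_nonempty with rfl | hS
  · simp
  refine le_of_forall_pos_lt_add fun κ hκ => ?_
  have near : ∀ w, infDist w S + dist w c < ρ →
      ∃ p ∈ closedBall c ρ ∩ S, dist w p < infDist w S + κ := by
    intro w hw
    obtain ⟨p, hpS, hp⟩ := (infDist_lt_iff hS).mp
      (lt_min (lt_add_of_pos_right _ hκ) (lt_sub_iff_add_lt.mpr hw))
    refine ⟨p, ⟨?_, hpS⟩, hp.trans_le (min_le_left _ _)⟩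
    rw [mem_closedBall]
    linarith [dist_triangle p w c, dist_comm w p, hp.trans_le (min_le_right _ _)]
  obtain ⟨p, hp, hup⟩ := near u hu
  obtain ⟨q, hq, hvq⟩ := near v hv
  have hhalf : (1 / 2 : ℝ) ∈ Icc (0:ℝ) 1 := by norm_num
  calc infDist (geo u v (1 / 2)) S ≤ dist (geo u v (1 / 2)) (geo p q (1 / 2)) :=
        infDist_le_dist_of_mem (hconv p hp q hq ⟨1 / 2, hhalf, rfl⟩).2
    _ ≤ (1 - 1 / 2) * dist u p + 1 / 2 * dist v q := dist_geo_geo_le u p v q hhalf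
    _ < (infDist u S + infDist v S) / 2 + κ := by linarith

/-- The distance from `S` along `[x, y']` vanishes at the ends and is midpoint convex on short
windows, thanks to a uniform convexity radius of `S` along the compact segment `[x, y]`. -/
lemma IsLocallyGConvex.eventually_geoSeg_subset {S : Set X} (hS : IsLocallyGConvex S)
    (hSc : IsClosed S) {x y : X} (hxy : geoSeg X x y ⊆ S) :
    ∀ᶠ y' in 𝓝 y, y' ∈ S → geoSeg X x y' ⊆ S := by
  obtain ⟨ρ, hρ, hconv⟩ := hS.exists_radius_of_isCompact (isCompact_geoSeg x y) hxy
  have hγ : ∀ t ∈ Icc (0:ℝ) 1, geo x y t ∈ S := fun t ht => hxy ⟨t, ht, rfl⟩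
  rw [Metric.eventually_nhds_iff]
  refine ⟨ρ / 4, by positivity, fun y' hy' hy'S => ?_⟩
  set F : ℝ → ℝ := fun t => infDist (geo x y' t) S
  have hclose : ∀ t ∈ Icc (0:ℝ) 1, dist (geo x y' t) (geo x y t) < ρ / 4 := fun t ht =>
    (dist_geo_geo_right_le x y' y ht).trans_lt
      ((mul_le_of_le_one_left dist_nonneg ht.2).trans_lt hy')
  have hF : ∀ t ∈ Icc (0:ℝ) 1, F t < ρ / 4 := fun t ht =>
    (infDist_le_dist_of_mem (hγ t ht)).trans_lt (hclose t ht)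
  have hmid : ∀ a b, 0 ≤ a → a ≤ b → b ≤ 1 → b - a ≤ ρ / (4 * (dist x y + 1)) →
      F ((a + b) / 2) ≤ (F a + F b) / 2 := by
    intro a b ha hab hb hba
    have ha' : a ∈ Icc (0:ℝ) 1 := ⟨ha, hab.trans hb⟩
    have hb' : b ∈ Icc (0:ℝ) 1 := ⟨ha.trans hab, hb⟩
    have hγab : dist (geo x y b) (geo x y a) ≤ ρ / 4 := by
      rw [geo_dist x y b hb' a ha', abs_of_nonneg (sub_nonneg.mpr hab)]
      calc (b - a) * dist x y ≤ ρ / (4 * (dist x y + 1)) * (dist x y + 1) := by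
            gcongr
            linarith [dist_nonneg (x := x) (y := y)]
        _ = ρ / 4 := by field_simp
    have hhalf : geo x y' ((a + b) / 2) = geo (geo x y' a) (geo x y' b) (1 / 2) := by
      rw [geo_geo_geo x y' ha' hb' (by norm_num)]
      ring_nf
    simp only [F, hhalf]
    refine infDist_geo_half_le (hconv (geo x y a) ⟨a, ha', rfl⟩) ?_ ?_
    · linarith [hF a ha', hclose a ha']
    · linarith [hF b hb', hclose b hb', dist_triangle (geo x y' b) (geo x y b) (geo x y a)]
  have hF₀ : F 0 = 0 := by
    simpa [F, geo_zero] using infDist_zero_of_mem (hγ 0 ⟨le_rfl, zero_le_one⟩)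
  have hF₁ : F 1 = 0 := by simpa [F, geo_one] using infDist_zero_of_mem hy'S
  have hFcont : ContinuousOn F (Icc 0 1) :=
    (continuous_infDist_pt S).comp_continuousOn (continuousOn_geo x y')
  rintro _ ⟨t, ht, rfl⟩
  have := hFcont.le_zero_of_midpoint_le (by positivity) hF₀.le hF₁.le hmid t ht
  exact (hSc.mem_iff_infDist_zero ⟨y', hy'S⟩).mpr (le_antisymm this infDist_nonneg)

/-- Slide the endpoint of `[x, z]` along `[z, y]`: the parameters for which the segment stays
in `S` form a closed subset of `[0, 1]` which is open to the right. -/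
lemma IsLocallyGConvex.geoSeg_subset_trans {S : Set X} (hS : IsLocallyGConvex S)
    (hSc : IsClosed S) {x y z : X} (hxz : geoSeg X x z ⊆ S) (hzy : geoSeg X z y ⊆ S) :
    geoSeg X x y ⊆ S := by
  have hw : ∀ θ ∈ Icc (0:ℝ) 1, geo z y θ ∈ S := fun θ hθ => hzy ⟨θ, hθ, rfl⟩
  suffices Icc (0:ℝ) 1 ⊆ geo z y ⁻¹' {w | geoSeg X x w ⊆ S} by
    simpa [geo_one] using this ⟨zero_le_one, le_rfl⟩
  refine IsClosed.Icc_subset_of_forall_mem_nhdsWithin ?_ (by simpa [geo_zero] using hxz) ?_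
  · rw [inter_comm]
    exact (continuousOn_geo z y).preimage_isClosed_of_isClosed isClosed_Icc
      (isClosed_setOf_geoSeg_subset hSc x)
  · rintro θ ⟨hθ, hθ'⟩
    have hIcc : Icc (0:ℝ) 1 ∈ 𝓝[>] θ := Icc_mem_nhdsGT_of_mem hθ'
    have hcont : Tendsto (geo z y) (𝓝[>] θ) (𝓝 (geo z y θ)) :=
      (continuousOn_geo z y θ (Ico_subset_Icc_self hθ')).mono_of_mem_nhdsWithin hIcc
    filter_upwards [hcont.eventually (hS.eventually_geoSeg_subset hSc hθ), hIcc] with θ' h h'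
    exact h (hw θ' h')

end Perturbation

theorem stmt2_general {X : Type*} [MetricSpace X] [CAT0 X]
    (C₁ C₂ : Set X) (h₁closed : IsClosed C₁) (h₂closed : IsClosed C₂)
    (h₁conv : GConvex X C₁) (h₂conv : GConvex X C₂)
    (ε : ℝ) (hε : 0 < ε) (hconn : IsConnected (C₁ ∪ C₂))
    (hloc : ∀ x ∈ frontier C₁ ∩ frontier C₂,
      GConvex X (closedBall x ε ∩ (C₁ ∪ C₂))) :
    GConvex X (C₁ ∪ C₂) := by
  have hU := isLocallyGConvex_union h₁closed h₂closed h₁conv h₂conv hε hloc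
  have hUc := h₁closed.union h₂closed
  have hmeet : ∀ x ∈ C₁, ∀ y ∈ C₂, (C₁ ∩ C₂).Nonempty := fun x hx y hy =>
    (isPreconnected_closed_iff.mp hconn.isPreconnected C₁ C₂ h₁closed h₂closed subset_rfl
      ⟨x, Or.inl hx, hx⟩ ⟨y, Or.inr hy, hy⟩).mono inter_subset_right
  rintro x (hx | hx) y (hy | hy)
  · exact (h₁conv x hx y hy).trans subset_union_left
  · obtain ⟨z, hz₁, hz₂⟩ := hmeet x hx y hy
    exact hU.geoSeg_subset_trans hUc ((h₁conv x hx z hz₁).trans subset_union_left)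
      ((h₂conv z hz₂ y hy).trans subset_union_right)
  · obtain ⟨z, hz₁, hz₂⟩ := hmeet y hy x hx
    exact hU.geoSeg_subset_trans hUc ((h₂conv x hx z hz₂).trans subset_union_right)
      ((h₁conv z hz₁ y hy).trans subset_union_left)
  · exact (h₂conv x hx y hy).trans subset_union_right

theorem stmt2 {X : Type*} [MetricSpace X] [CompleteSpace X] [CAT0 X]
    (C₁ C₂ : Set X) (h₁closed : IsClosed C₁) (h₂closed : IsClosed C₂)
    (h₁conv : GConvex X C₁) (h₂conv : GConvex X C₂)
    (ε : ℝ) (hε : 0 < ε) (hconn : IsConnected (C₁ ∪ C₂))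
    (hloc : ∀ x ∈ frontier C₁ ∩ frontier C₂,
      GConvex X (closedBall x ε ∩ (C₁ ∪ C₂))) :
    GConvex X (C₁ ∪ C₂) :=
  stmt2_general C₁ C₂ h₁closed h₂closed h₁conv h₂conv ε hε hconn hloc
end

section
/- Let X be a complete CAT(0) space and C ⊆ X a closed connected subset. Suppose there exists ε > 0 such that for every point x in the topological boundary ∂C of C, the set B_ε(x) ∩ C is convex. Then C is convex. -/
set_option maxHeartbeats 1000000


open Set Metric

namespace CAT0Aux

variable {X : Type*} [MetricSpace X] [CAT0 X]

lemma mem_geoSeg {x y : X} {t : ℝ} (ht : t ∈ Icc (0:ℝ) 1) :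
    CAT0.geo x y t ∈ geoSeg X x y := ⟨t, ht, rfl⟩

lemma geo_unique (x y : X) (γ : ℝ → X) (h0 : γ 0 = x) (h1 : γ 1 = y)
    (hd : ∀ s ∈ Icc (0:ℝ) 1, ∀ t ∈ Icc (0:ℝ) 1, dist (γ s) (γ t) = |s - t| * dist x y) :
    ∀ t ∈ Icc (0:ℝ) 1, CAT0.geo x y t = γ t := by
  intro t ht
  have h := CAT0.comparison x y (γ t) t ht
  have hI0 : (0:ℝ) ∈ Icc (0:ℝ) 1 := ⟨le_refl _, zero_le_one⟩
  have hI1 : (1:ℝ) ∈ Icc (0:ℝ) 1 := ⟨zero_le_one, le_refl _⟩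
  have hx : dist x (γ t) = t * dist x y := by
    have h' := hd 0 hI0 t ht
    rw [h0] at h'
    rw [h', zero_sub, abs_neg, abs_of_nonneg ht.1]
  have hy : dist y (γ t) = (1 - t) * dist x y := by
    have h' := hd 1 hI1 t ht
    rw [h1] at h'
    rw [h', abs_of_nonneg (by linarith [ht.2] : (0:ℝ) ≤ 1 - t)]
  rw [hx, hy] at h
  have h2 : dist (CAT0.geo x y t) (γ t) ^ 2 ≤ 0 := by nlinarith [ht.1, ht.2, dist_nonneg (x := x) (y := y)]
  have h3 : dist (CAT0.geo x y t) (γ t) = 0 := by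
    nlinarith [dist_nonneg (x := CAT0.geo x y t) (y := γ t)]
  exact dist_eq_zero.mp h3

lemma geo_self (x : X) {t : ℝ} (ht : t ∈ Icc (0:ℝ) 1) : CAT0.geo x x t = x := by
  have := geo_unique x x (fun _ => x) rfl rfl (by
    intro s hs u hu; simp) t ht
  simpa using this

lemma geo_symm (x y : X) {t : ℝ} (ht : t ∈ Icc (0:ℝ) 1) :
    CAT0.geo x y t = CAT0.geo y x (1 - t) := by
  have := geo_unique x y (fun u => CAT0.geo y x (1 - u)) (by simp [CAT0.geo_one])
    (by simp [CAT0.geo_zero]) (by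
      intro s hs u hu
      have := CAT0.geo_dist y x (1 - s) ⟨by linarith [hs.2], by linarith [hs.1]⟩
        (1 - u) ⟨by linarith [hu.2], by linarith [hu.1]⟩
      rw [this, dist_comm y x]
      congr 1
      rw [show (1 - s) - (1 - u) = -(s - u) by ring, abs_neg]) t ht
  exact this

lemma geo_reparam (x y : X) {a b : ℝ} (ha : a ∈ Icc (0:ℝ) 1) (hb : b ∈ Icc (0:ℝ) 1)
    (hab : a ≤ b) {t : ℝ} (ht : t ∈ Icc (0:ℝ) 1) :
    CAT0.geo (CAT0.geo x y a) (CAT0.geo x y b) t = CAT0.geo x y (a + t * (b - a)) := by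
  have hmem : ∀ u ∈ Icc (0:ℝ) 1, a + u * (b - a) ∈ Icc (0:ℝ) 1 := by
    intro u hu
    constructor
    · nlinarith [ha.1, hu.1]
    · nlinarith [hb.2, hu.2, hu.1]
  have hd : dist (CAT0.geo x y a) (CAT0.geo x y b) = (b - a) * dist x y := by
    rw [CAT0.geo_dist x y a ha b hb, abs_of_nonpos (by linarith), neg_sub]
  have := geo_unique (CAT0.geo x y a) (CAT0.geo x y b)
    (fun u => CAT0.geo x y (a + u * (b - a)))
    (by simp) (by simp) (by
      intro s hs u hu
      rw [CAT0.geo_dist x y _ (hmem s hs) _ (hmem u hu), hd,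
        show a + s * (b - a) - (a + u * (b - a)) = (s - u) * (b - a) by ring,
        abs_mul, abs_of_nonneg (by linarith : (0:ℝ) ≤ b - a)]
      ring) t ht
  exact this

lemma geoSeg_subset (x y : X) {a b : ℝ} (ha : a ∈ Icc (0:ℝ) 1) (hb : b ∈ Icc (0:ℝ) 1)
    (hab : a ≤ b) : geoSeg X (CAT0.geo x y a) (CAT0.geo x y b) ⊆ geoSeg X x y := by
  rintro w ⟨t, ht, rfl⟩
  show CAT0.geo (CAT0.geo x y a) (CAT0.geo x y b) t ∈ geoSeg X x y
  rw [geo_reparam x y ha hb hab ht]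
  refine mem_geoSeg ⟨?_, ?_⟩
  · nlinarith [ha.1, ht.1]
  · nlinarith [hb.2, ht.2, ht.1]

lemma geoSeg_subset_left (x y : X) {c : ℝ} (hc : c ∈ Icc (0:ℝ) 1) :
    geoSeg X x (CAT0.geo x y c) ⊆ geoSeg X x y := by
  have := geoSeg_subset x y (a := 0) (b := c) ⟨le_refl _, zero_le_one⟩ hc hc.1
  rwa [CAT0.geo_zero] at this

lemma geoSeg_subset_right (x y : X) {c : ℝ} (hc : c ∈ Icc (0:ℝ) 1) :
    geoSeg X (CAT0.geo x y c) y ⊆ geoSeg X x y := by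
  have := geoSeg_subset x y (a := c) (b := 1) hc ⟨zero_le_one, le_refl _⟩ hc.2
  rwa [CAT0.geo_one] at this


variable {X : Type*} [MetricSpace X] [CAT0 X]
lemma dist_geo_left (x y : X) {t : ℝ} (ht : t ∈ Icc (0:ℝ) 1) :
    dist x (CAT0.geo x y t) = t * dist x y := by
  have h := CAT0.geo_dist x y 0 ⟨le_refl _, zero_le_one⟩ t ht
  rw [CAT0.geo_zero] at h
  rw [h, zero_sub, abs_neg, abs_of_nonneg ht.1]

lemma dist_geo_right (x y : X) {t : ℝ} (ht : t ∈ Icc (0:ℝ) 1) :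
    dist (CAT0.geo x y t) y = (1 - t) * dist x y := by
  have h := CAT0.geo_dist x y t ht 1 ⟨zero_le_one, le_refl _⟩
  rw [CAT0.geo_one] at h
  rw [h, abs_of_nonpos (by linarith [ht.2]), neg_sub]

/-- Convexity of the metric, common left endpoint. -/
lemma geo_conv_left (p q q' : X) {t : ℝ} (ht : t ∈ Icc (0:ℝ) 1) :
    dist (CAT0.geo p q t) (CAT0.geo p q' t) ≤ t * dist q q' := by
  have h1 := CAT0.comparison p q (CAT0.geo p q' t) t ht
  have h2 := CAT0.comparison p q' q t ht
  have hpz : dist p (CAT0.geo p q' t) = t * dist p q' := dist_geo_left p q' ht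
  rw [hpz] at h1
  rw [dist_comm q (CAT0.geo p q' t)] at h1
  rw [dist_comm q' q] at h2
  have hsq : dist (CAT0.geo p q t) (CAT0.geo p q' t) ^ 2 ≤ (t * dist q q') ^ 2 := by
    nlinarith [ht.1, ht.2]
  nlinarith [dist_nonneg (x := CAT0.geo p q t) (y := CAT0.geo p q' t),
    mul_nonneg ht.1 (dist_nonneg (x := q) (y := q'))]

/-- Convexity of the metric, common right endpoint. -/
lemma geo_conv_right (p p' q : X) {t : ℝ} (ht : t ∈ Icc (0:ℝ) 1) :
    dist (CAT0.geo p q t) (CAT0.geo p' q t) ≤ (1 - t) * dist p p' := by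
  have ht' : 1 - t ∈ Icc (0:ℝ) 1 := ⟨by linarith [ht.2], by linarith [ht.1]⟩
  rw [geo_symm p q ht, geo_symm p' q ht]
  exact geo_conv_left q p p' ht'

/-- Convexity of the metric, both endpoints vary. -/
lemma geo_conv (p p' q q' : X) {t : ℝ} (ht : t ∈ Icc (0:ℝ) 1) :
    dist (CAT0.geo p q t) (CAT0.geo p' q' t) ≤ (1 - t) * dist p p' + t * dist q q' := by
  calc dist (CAT0.geo p q t) (CAT0.geo p' q' t)
      ≤ dist (CAT0.geo p q t) (CAT0.geo p q' t) + dist (CAT0.geo p q' t) (CAT0.geo p' q' t) :=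
        dist_triangle _ _ _
    _ ≤ t * dist q q' + (1 - t) * dist p p' :=
        add_le_add (geo_conv_left p q q' ht) (geo_conv_right p p' q' ht)
    _ = (1 - t) * dist p p' + t * dist q q' := by ring

/-- Closed balls are convex. -/
lemma ball_convex (p : X) (R : ℝ) {u v : X} (hu : u ∈ closedBall p R) (hv : v ∈ closedBall p R) :
    geoSeg X u v ⊆ closedBall p R := by
  rintro w ⟨t, ht, rfl⟩
  have h := CAT0.comparison u v p t ht
  have hu' : dist u p ≤ R := mem_closedBall.mp hu
  have hv' : dist v p ≤ R := mem_closedBall.mp hv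
  have hR : 0 ≤ R := le_trans dist_nonneg hu'
  show CAT0.geo u v t ∈ closedBall p R
  rw [mem_closedBall]
  have ha2 : dist u p ^ 2 ≤ R ^ 2 := by nlinarith [dist_nonneg (x := u) (y := p)]
  have hb2 : dist v p ^ 2 ≤ R ^ 2 := by nlinarith [dist_nonneg (x := v) (y := p)]
  have hsq : dist (CAT0.geo u v t) p ^ 2 ≤ R ^ 2 := by
    nlinarith [ht.1, ht.2, mul_nonneg (mul_nonneg ht.1 (by linarith [ht.2] : (0:ℝ) ≤ 1 - t))
      (sq_nonneg (dist u v))]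
  nlinarith [dist_nonneg (x := CAT0.geo u v t) (y := p)]


lemma exists_frontier_point {C : Set X} (hclosed : IsClosed C) {p z : X}
    (hp : p ∈ C) (hz : z ∉ C) : ∃ q ∈ frontier C, dist p q ≤ dist p z := by
  set γ : ℝ → X := fun t => CAT0.geo p z (min 1 (max 0 t)) with hγ
  have hclamp : ∀ t : ℝ, min 1 (max 0 t) ∈ Icc (0:ℝ) 1 := by
    intro t
    constructor
    · exact le_min zero_le_one (le_max_left 0 t)
    · exact min_le_left _ _
  have hclampid : ∀ t ∈ Icc (0:ℝ) 1, min 1 (max 0 t) = t := by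
    intro t ht
    rw [max_eq_right ht.1, min_eq_right ht.2]
  have hcont : Continuous γ := by
    apply LipschitzWith.continuous (K := (dist p z).toNNReal)
    apply LipschitzWith.of_dist_le_mul
    intro a b
    have h1 : dist (γ a) (γ b) = |min 1 (max 0 a) - min 1 (max 0 b)| * dist p z :=
      CAT0.geo_dist p z _ (hclamp a) _ (hclamp b)
    have h2 : |min 1 (max 0 a) - min 1 (max 0 b)| ≤ |a - b| := by
      have hmin : |min 1 (max 0 a) - min 1 (max 0 b)| ≤ max |(1:ℝ) - 1| |max 0 a - max 0 b| :=
        abs_min_sub_min_le_max 1 (max 0 a) 1 (max 0 b)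
      have hmax : |max 0 a - max 0 b| ≤ max |(0:ℝ) - 0| |a - b| :=
        abs_max_sub_max_le_max 0 a 0 b
      simp only [sub_self, abs_zero] at hmin hmax
      have hmin' : |min 1 (max 0 a) - min 1 (max 0 b)| ≤ |max 0 a - max 0 b| :=
        le_trans hmin (max_le (abs_nonneg _) le_rfl)
      have hmax' : |max 0 a - max 0 b| ≤ |a - b| :=
        le_trans hmax (max_le (abs_nonneg _) le_rfl)
      exact le_trans hmin' hmax'
    rw [h1, Real.coe_toNNReal _ dist_nonneg, Real.dist_eq, mul_comm]
    exact mul_le_mul_of_nonneg_left h2 dist_nonneg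
  set A : Set ℝ := {t | t ∈ Icc (0:ℝ) 1 ∧ CAT0.geo p z t ∈ C} with hA
  have hAeq : A = Icc (0:ℝ) 1 ∩ γ ⁻¹' C := by
    ext t
    simp only [hA, mem_setOf_eq, mem_inter_iff, mem_preimage, hγ]
    constructor
    · rintro ⟨ht, htc⟩; exact ⟨ht, by rwa [hclampid t ht]⟩
    · rintro ⟨ht, htc⟩; exact ⟨ht, by rwa [hclampid t ht] at htc⟩
  have hAclosed : IsClosed A := by
    rw [hAeq]; exact isClosed_Icc.inter (hclosed.preimage hcont)
  have hA0 : (0:ℝ) ∈ A := ⟨⟨le_refl _, zero_le_one⟩, by rw [CAT0.geo_zero]; exact hp⟩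
  have hAbdd : BddAbove A := ⟨1, fun t ht => ht.1.2⟩
  set t₀ := sSup A with ht₀
  have ht₀A : t₀ ∈ A := hAclosed.csSup_mem ⟨0, hA0⟩ hAbdd
  have ht₀lt : t₀ < 1 := by
    rcases lt_or_eq_of_le ht₀A.1.2 with h | h
    · exact h
    · exfalso; apply hz
      have := ht₀A.2; rw [h, CAT0.geo_one] at this; exact this
  set q := CAT0.geo p z t₀ with hq
  have hdpq : dist p q ≤ dist p z := by
    rw [hq, dist_geo_left p z ht₀A.1]
    nlinarith [dist_nonneg (x := p) (y := z), ht₀A.1.1, ht₀A.1.2]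
  refine ⟨q, ?_, hdpq⟩
  rw [frontier_eq_closure_inter_closure]
  refine ⟨subset_closure ht₀A.2, ?_⟩
  rw [Metric.mem_closure_iff]
  intro δ hδ
  set c := δ / (dist p z + 1) with hc
  have hdpz1 : (0:ℝ) < dist p z + 1 := by positivity
  have hcpos : 0 < c := div_pos hδ hdpz1
  have hcmul : c * (dist p z + 1) = δ := div_mul_cancel₀ δ (ne_of_gt hdpz1)
  set u := min 1 (t₀ + c) with hu
  have hu1 : u ≤ 1 := min_le_left _ _
  have hu0 : 0 ≤ u := le_min zero_le_one (by linarith [ht₀A.1.1])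
  have hugt : t₀ < u := lt_min ht₀lt (by linarith)
  have huIcc : u ∈ Icc (0:ℝ) 1 := ⟨hu0, hu1⟩
  have huA : u ∉ A := fun h => absurd (le_csSup hAbdd h) (not_le.mpr hugt)
  have huC : CAT0.geo p z u ∉ C := fun h => huA ⟨huIcc, h⟩
  refine ⟨CAT0.geo p z u, huC, ?_⟩
  have hd : dist q (CAT0.geo p z u) = (u - t₀) * dist p z := by
    rw [hq, CAT0.geo_dist p z t₀ ht₀A.1 u huIcc, abs_of_nonpos (by linarith), neg_sub]
  rw [hd]
  have huc : u - t₀ ≤ c := by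
    have : u ≤ t₀ + c := min_le_right _ _
    linarith
  nlinarith [dist_nonneg (x := p) (y := z)]

lemma short_seg {C : Set X} (hclosed : IsClosed C) {ε : ℝ} (hε : 0 < ε)
    (hloc : ∀ x ∈ frontier C, GConvex X (closedBall x ε ∩ C)) :
    ∀ x ∈ C, ∀ y ∈ C, dist x y ≤ ε/2 → geoSeg X x y ⊆ C := by
  intro x hx y hy hxy
  by_cases hball : closedBall x (ε/2) ⊆ C
  · exact (ball_convex x (ε/2) (mem_closedBall_self (by linarith))
      (by rw [mem_closedBall, dist_comm]; exact hxy)).trans hball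
  · obtain ⟨z, hz, hzC⟩ : ∃ z ∈ closedBall x (ε/2), z ∉ C := by
      by_contra h
      push_neg at h
      exact hball h
    obtain ⟨q, hq, hpq⟩ := exists_frontier_point hclosed hx hzC
    have hxz : dist x z ≤ ε/2 := by rw [dist_comm]; exact mem_closedBall.mp hz
    have hdq : dist x q ≤ ε/2 := le_trans hpq hxz
    have hxq : x ∈ closedBall q ε ∩ C := ⟨by rw [mem_closedBall]; linarith, hx⟩
    have hyq : y ∈ closedBall q ε ∩ C := by
      refine ⟨?_, hy⟩
      rw [mem_closedBall]
      calc dist y q ≤ dist y x + dist x q := dist_triangle _ _ _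
        _ ≤ ε := by rw [dist_comm y x]; linarith
    exact (hloc q hq x hxq y hyq).trans inter_subset_right

lemma key {C : Set X} (hclosed : IsClosed C) {s : ℝ} (hs : 0 < s)
    (hB : ∀ x ∈ C, ∀ y ∈ C, dist x y ≤ 3 * s → geoSeg X x y ⊆ C) :
    ∀ n : ℕ, ∀ x ∈ C, ∀ y ∈ C, ∀ m₀ ∈ C,
      geoSeg X x m₀ ⊆ C → geoSeg X m₀ y ⊆ C →
      dist x m₀ + dist m₀ y ≤ n * s → geoSeg X x y ⊆ C := by
  intro n
  induction n using Nat.strong_induction_on with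
  | _ n IH =>
  intro x hx y hy m₀ hm₀ hxm hmy hsum
  have hI : (1/2 : ℝ) ∈ Icc (0:ℝ) 1 := by norm_num
  by_cases hn : n ≤ 3
  · refine hB x hx y hy ?_
    have hn3 : (n:ℝ) ≤ 3 := by exact_mod_cast hn
    have hd := dist_triangle x m₀ y
    nlinarith
  push_neg at hn
  have hn4 : (4:ℝ) ≤ (n:ℝ) := by exact_mod_cast hn
  have hn1 : 1 ≤ n := by omega
  have hlt : n - 1 < n := by omega
  have hcast : ((n - 1 : ℕ) : ℝ) = (n:ℝ) - 1 := by
    rw [Nat.cast_sub hn1, Nat.cast_one]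
  -- the averaging map
  set F : X → X := fun z =>
    CAT0.geo (CAT0.geo x z (1/2)) (CAT0.geo z y (1/2)) (1/2) with hF
  -- one step of the iteration preserves the invariant
  have step : ∀ z, z ∈ C → geoSeg X x z ⊆ C → geoSeg X z y ⊆ C →
      dist x z + dist z y ≤ n * s →
      F z ∈ C ∧ geoSeg X x (F z) ⊆ C ∧ geoSeg X (F z) y ⊆ C ∧
        dist x (F z) + dist (F z) y ≤ n * s := by
    intro z hz hxz hzy hL
    set p := CAT0.geo x z (1/2) with hpdef
    set q := CAT0.geo z y (1/2) with hqdef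
    have hp : p ∈ C := hxz (mem_geoSeg hI)
    have hq : q ∈ C := hzy (mem_geoSeg hI)
    have hdxp : dist x p = 1/2 * dist x z := dist_geo_left x z hI
    have hdpz : dist p z = 1/2 * dist x z := by
      have h := dist_geo_right x z hI; rw [h]; norm_num
    have hdzq : dist z q = 1/2 * dist z y := dist_geo_left z y hI
    have hdqy : dist q y = 1/2 * dist z y := by
      have h := dist_geo_right z y hI; rw [h]; norm_num
    have hdpq : dist p q ≤ 1/2 * (dist x z + dist z y) := by
      have h := dist_triangle p z q
      linarith
    have hsegpz : geoSeg X p z ⊆ C := (geoSeg_subset_right x z hI).trans hxz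
    have hsegzq : geoSeg X z q ⊆ C := (geoSeg_subset_left z y hI).trans hzy
    have hpq : geoSeg X p q ⊆ C := by
      refine IH (n-1) hlt p hp q hq z hz hsegpz hsegzq ?_
      rw [hcast]
      nlinarith [mul_nonneg (by linarith : (0:ℝ) ≤ (n:ℝ) - 4) hs.le, hs.le,
        dist_nonneg (x := x) (y := z), dist_nonneg (x := z) (y := y)]
    have hFz : F z ∈ C := hpq (mem_geoSeg hI)
    have hdpm : dist p (F z) = 1/2 * dist p q := dist_geo_left p q hI
    have hdmq : dist (F z) q = 1/2 * dist p q := by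
      have h := dist_geo_right p q hI; rw [h]; norm_num
    have hsegxm : geoSeg X x (F z) ⊆ C := by
      refine IH (n-1) hlt x hx (F z) hFz p hp
        ((geoSeg_subset_left x z hI).trans hxz)
        ((geoSeg_subset_left p q hI).trans hpq) ?_
      rw [hcast]
      nlinarith [mul_nonneg (by linarith : (0:ℝ) ≤ (n:ℝ) - 4) hs.le, hs.le,
        dist_nonneg (x := x) (y := z), dist_nonneg (x := z) (y := y)]
    have hsegmy : geoSeg X (F z) y ⊆ C := by
      refine IH (n-1) hlt (F z) hFz y hy q hq
        ((geoSeg_subset_right p q hI).trans hpq)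
        ((geoSeg_subset_right z y hI).trans hzy) ?_
      rw [hcast]
      nlinarith [mul_nonneg (by linarith : (0:ℝ) ≤ (n:ℝ) - 4) hs.le, hs.le,
        dist_nonneg (x := x) (y := z), dist_nonneg (x := z) (y := y)]
    refine ⟨hFz, hsegxm, hsegmy, ?_⟩
    have h1 := dist_triangle x p (F z)
    have h2 := dist_triangle (F z) q y
    nlinarith
  -- the iterated sequence
  set m : ℕ → X := fun k => F^[k] m₀ with hm
  have hm0 : m 0 = m₀ := rfl
  have hmsucc : ∀ k, m (k + 1) = F (m k) := by
    intro k; rw [hm]; exact Function.iterate_succ_apply' F k m₀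
  have Inv : ∀ k, m k ∈ C ∧ geoSeg X x (m k) ⊆ C ∧ geoSeg X (m k) y ⊆ C ∧
      dist x (m k) + dist (m k) y ≤ n * s := by
    intro k
    induction k with
    | zero => exact ⟨hm₀, hxm, hmy, hsum⟩
    | succ k ih =>
      rw [hmsucc k]
      exact step (m k) ih.1 ih.2.1 ih.2.2.1 ih.2.2.2
  -- the midpoint and reparametrization identities
  set md := CAT0.geo x y (1/2) with hmd
  have hIq : (1/4 : ℝ) ∈ Icc (0:ℝ) 1 := by norm_num
  have hI34 : (3/4 : ℝ) ∈ Icc (0:ℝ) 1 := by norm_num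
  have hI0 : (0:ℝ) ∈ Icc (0:ℝ) 1 := by norm_num
  have hI1 : (1:ℝ) ∈ Icc (0:ℝ) 1 := by norm_num
  have hpstar : CAT0.geo x md (1/2) = CAT0.geo x y (1/4) := by
    have h := geo_reparam x y (a := 0) (b := 1/2) hI0 hI (by norm_num) (t := 1/2) hI
    rw [CAT0.geo_zero] at h
    rw [hmd, h]; norm_num
  have hqstar : CAT0.geo md y (1/2) = CAT0.geo x y (3/4) := by
    have h := geo_reparam x y (a := 1/2) (b := 1) hI hI1 (by norm_num) (t := 1/2) hI
    rw [CAT0.geo_one] at h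
    rw [hmd, h]; norm_num
  have hmidid : CAT0.geo (CAT0.geo x y (1/4)) (CAT0.geo x y (3/4)) (1/2) = md := by
    have h := geo_reparam x y (a := 1/4) (b := 3/4) hIq hI34 (by norm_num) (t := 1/2) hI
    rw [hmd, h]; norm_num
  -- contraction
  have hcontr : ∀ z : X, dist (F z) md ≤ 1/2 * dist z md := by
    intro z
    have h0 : dist (F z) md =
        dist (CAT0.geo (CAT0.geo x z (1/2)) (CAT0.geo z y (1/2)) (1/2))
          (CAT0.geo (CAT0.geo x md (1/2)) (CAT0.geo md y (1/2)) (1/2)) := by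
      rw [hpstar, hqstar, hmidid]
    have h1 := geo_conv (CAT0.geo x z (1/2)) (CAT0.geo x md (1/2))
      (CAT0.geo z y (1/2)) (CAT0.geo md y (1/2)) hI
    have h2 : dist (CAT0.geo x z (1/2)) (CAT0.geo x md (1/2)) ≤ 1/2 * dist z md :=
      geo_conv_left x z md hI
    have h3 : dist (CAT0.geo z y (1/2)) (CAT0.geo md y (1/2)) ≤ (1 - 1/2) * dist z md :=
      geo_conv_right z md y hI
    rw [h0]
    refine le_trans h1 ?_
    linarith
  have hdecay : ∀ k, dist (m k) md ≤ (1/2)^k * dist m₀ md := by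
    intro k
    induction k with
    | zero => simp [hm0]
    | succ k ih =>
      rw [hmsucc k]
      calc dist (F (m k)) md ≤ 1/2 * dist (m k) md := hcontr (m k)
        _ ≤ 1/2 * ((1/2)^k * dist m₀ md) := by
            nlinarith [dist_nonneg (x := m k) (y := md)]
        _ = (1/2)^(k+1) * dist m₀ md := by ring
  have happrox : ∀ δ : ℝ, 0 < δ → ∃ k, dist (m k) md < δ := by
    intro δ hδ
    set D := dist m₀ md with hD
    have hD0 : 0 ≤ D := dist_nonneg
    have hD1 : (0:ℝ) < D + 1 := by linarith
    obtain ⟨k, hk⟩ := exists_pow_lt_of_lt_one (div_pos hδ hD1) (by norm_num : (1/2:ℝ) < 1)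
    refine ⟨k, lt_of_le_of_lt (hdecay k) ?_⟩
    have hmul : δ / (D + 1) * (D + 1) = δ := div_mul_cancel₀ δ (ne_of_gt hD1)
    have hpk : (0:ℝ) ≤ (1/2:ℝ)^k := by positivity
    nlinarith
  -- membership of the limit and of the limit segments
  have hclosure : ∀ w : X, (∀ δ : ℝ, 0 < δ → ∃ c ∈ C, dist w c < δ) → w ∈ C := by
    intro w hw
    have : w ∈ closure C := Metric.mem_closure_iff.mpr (fun δ hδ => hw δ hδ)
    rwa [hclosed.closure_eq] at this
  have hsegxmd : geoSeg X x md ⊆ C := by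
    rintro w ⟨t, ht, rfl⟩
    refine hclosure _ ?_
    intro δ hδ
    obtain ⟨k, hk⟩ := happrox δ hδ
    refine ⟨CAT0.geo x (m k) t, (Inv k).2.1 (mem_geoSeg ht), ?_⟩
    have h := geo_conv_left x md (m k) ht
    have hdc : dist md (m k) = dist (m k) md := dist_comm _ _
    calc dist (CAT0.geo x md t) (CAT0.geo x (m k) t) ≤ t * dist md (m k) := h
      _ ≤ dist (m k) md := by
          rw [hdc]; nlinarith [dist_nonneg (x := m k) (y := md), ht.1, ht.2]
      _ < δ := hk
  have hsegmdy : geoSeg X md y ⊆ C := by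
    rintro w ⟨t, ht, rfl⟩
    refine hclosure _ ?_
    intro δ hδ
    obtain ⟨k, hk⟩ := happrox δ hδ
    refine ⟨CAT0.geo (m k) y t, (Inv k).2.2.1 (mem_geoSeg ht), ?_⟩
    have h := geo_conv_right md (m k) y ht
    have hdc : dist md (m k) = dist (m k) md := dist_comm _ _
    calc dist (CAT0.geo md y t) (CAT0.geo (m k) y t) ≤ (1 - t) * dist md (m k) := h
      _ ≤ dist (m k) md := by
          rw [hdc]; nlinarith [dist_nonneg (x := m k) (y := md), ht.1, ht.2]
      _ < δ := hk
  -- decompose the segment at the midpoint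
  rintro w ⟨t, ht, rfl⟩
  show CAT0.geo x y t ∈ C
  by_cases htt : t ≤ 1/2
  · have h2t : 2*t ∈ Icc (0:ℝ) 1 := ⟨by linarith [ht.1], by linarith⟩
    have h := geo_reparam x y (a := 0) (b := 1/2) hI0 hI (by norm_num) (t := 2*t) h2t
    rw [CAT0.geo_zero] at h
    have harg : 0 + 2*t*(1/2 - 0) = t := by ring
    rw [harg] at h
    rw [← h]
    exact hsegxmd (mem_geoSeg h2t)
  · push_neg at htt
    have h2t : 2*t - 1 ∈ Icc (0:ℝ) 1 := ⟨by linarith, by linarith [ht.2]⟩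
    have h := geo_reparam x y (a := 1/2) (b := 1) hI hI1 (by norm_num) (t := 2*t - 1) h2t
    rw [CAT0.geo_one] at h
    have harg : 1/2 + (2*t - 1)*(1 - 1/2) = t := by ring
    rw [harg] at h
    rw [← h]
    exact hsegmdy (mem_geoSeg h2t)

end CAT0Aux

theorem stmt3 {X : Type*} [MetricSpace X] [CompleteSpace X] [CAT0 X]
    (C : Set X) (hclosed : IsClosed C) (hconn : IsConnected C)
    (ε : ℝ) (hε : 0 < ε)
    (hloc : ∀ x ∈ frontier C, GConvex X (closedBall x ε ∩ C)) :
    GConvex X C := by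
  intro x hx y hy
  have hs : (0:ℝ) < ε/6 := by linarith
  have hshort := CAT0Aux.short_seg hclosed hε hloc
  have hB : ∀ a ∈ C, ∀ b ∈ C, dist a b ≤ 3 * (ε/6) → geoSeg X a b ⊆ C := by
    intro a ha b hb hd
    exact hshort a ha b hb (by linarith)
  set R : X → X → Prop := fun a b => b ∈ C ∧ dist a b ≤ ε/6 with hR
  -- every point of C is reachable from x by an (ε/6)-chain in C
  have hreach : ∀ b ∈ C, Relation.ReflTransGen R x b := by
    set V : Set X := {b | b ∈ C ∧ Relation.ReflTransGen R x b} with hV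
    set U₁ : Set X := ⋃ v ∈ V, ball v (ε/6) with hU₁
    set U₂ : Set X := ⋃ v ∈ C \ V, ball v (ε/6) with hU₂
    have hopen1 : IsOpen U₁ := isOpen_biUnion (fun _ _ => isOpen_ball)
    have hopen2 : IsOpen U₂ := isOpen_biUnion (fun _ _ => isOpen_ball)
    have hcover : C ⊆ U₁ ∪ U₂ := by
      intro c hc
      by_cases hcV : c ∈ V
      · exact Or.inl (mem_biUnion hcV (mem_ball_self hs))
      · exact Or.inr (mem_biUnion ⟨hc, hcV⟩ (mem_ball_self hs))
    have hdisj : ¬ (C ∩ (U₁ ∩ U₂)).Nonempty := by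
      rintro ⟨c, hcC, hc1, hc2⟩
      obtain ⟨v₁, hv₁, hcv₁⟩ := mem_iUnion₂.mp hc1
      obtain ⟨v₂, hv₂, hcv₂⟩ := mem_iUnion₂.mp hc2
      have hxc : Relation.ReflTransGen R x c :=
        hv₁.2.tail ⟨hcC, by rw [dist_comm]; exact le_of_lt (mem_ball.mp hcv₁)⟩
      have hxv₂ : Relation.ReflTransGen R x v₂ :=
        hxc.tail ⟨hv₂.1, le_of_lt (mem_ball.mp hcv₂)⟩
      exact hv₂.2 ⟨hv₂.1, hxv₂⟩
    have hne1 : (C ∩ U₁).Nonempty :=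
      ⟨x, hx, mem_biUnion (show x ∈ V from ⟨hx, Relation.ReflTransGen.refl⟩)
        (mem_ball_self hs)⟩
    intro b hb
    by_contra hbV
    have hne2 : (C ∩ U₂).Nonempty :=
      ⟨b, hb, mem_biUnion (show b ∈ C \ V from ⟨hb, fun h => hbV h.2⟩) (mem_ball_self hs)⟩
    exact hdisj (hconn.isPreconnected U₁ U₂ hopen1 hopen2 hcover hne1 hne2)
  -- points reachable by chains are in C
  have hmemC : ∀ b, Relation.ReflTransGen R x b → b ∈ C := by
    intro b h
    induction h with
    | refl => exact hx
    | tail _ hbc _ => exact hbc.1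
  -- chains give geodesics inside C
  have hchain : ∀ b, Relation.ReflTransGen R x b → geoSeg X x b ⊆ C := by
    intro b h
    induction h with
    | refl =>
      rintro w ⟨t, ht, rfl⟩
      show CAT0.geo x x t ∈ C
      rw [CAT0Aux.geo_self x ht]
      exact hx
    | @tail b c hxb hbc ih =>
      have hbC : b ∈ C := hmemC b hxb
      have hsegbc : geoSeg X b c ⊆ C := hB b hbC c hbc.1 (by linarith [hbc.2, hs])
      set n : ℕ := ⌈(dist x b + ε/6) / (ε/6)⌉₊ with hn
      have hle : (dist x b + ε/6) / (ε/6) ≤ (n:ℝ) := Nat.le_ceil _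
      have hbound : dist x b + dist b c ≤ (n:ℝ) * (ε/6) := by
        have h1 : dist x b + ε/6 ≤ (n:ℝ) * (ε/6) := by
          rw [div_le_iff₀ hs] at hle
          linarith
        linarith [hbc.2]
      exact CAT0Aux.key hclosed hs hB n x hx c hbc.1 b hbC ih hsegbc hbound
  exact hchain y (hreach y hy)
end
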